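/- arXiv:2104.12588 — 2 statements merged into one kernel-verified Lean document; each statement's English description precedes it below -/
import Mathlib

section
/- Let Y be a two-level ±1 design that is an OA(N,k,2,t) with N = λ·2^t, k ≥ t + 2, and λ even. Then for every nonempty subset l ⊆ Fin k, the J-characteristic J(l) is divisible by 2^{t+1}. -/
/-- All entries of `Y` are `1` or `-1`. -/
def isPM {N k : ℕ} (Y : Fin N → Fin k → ℤ) : Prop :=
  ∀ i j, Y i j = 1 ∨ Y i j = -1

/-- `Y` is a two-level orthogonal array OA(N,k,2,t): for every `t`-element set `T` of
columns and every `±1` sign pattern `ε`, the number of rows matching `ε` on `T`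
equals `N / 2^t` (equivalently, the count times `2^t` equals `N`). -/
def isOA2 (N k t : ℕ) (Y : Fin N → Fin k → ℤ) : Prop :=
  ∀ T : Finset (Fin k), T.card = t →
    ∀ ε : Fin k → ℤ, (∀ j, ε j = 1 ∨ ε j = -1) →
      (Finset.univ.filter (fun i : Fin N => ∀ j ∈ T, Y i j = ε j)).card * 2 ^ t = N

/-- The `J`-characteristic of the set of columns `l`. -/
def Jchar {N k : ℕ} (Y : Fin N → Fin k → ℤ) (l : Finset (Fin k)) : ℤ :=
  ∑ i : Fin N, ∏ j ∈ l, Y i j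


open Finset

def isPM' {R C : Type} (Y : R → C → ℤ) : Prop :=
  ∀ i j, Y i j = 1 ∨ Y i j = -1

def isOA' {R C : Type} [Fintype R] [DecidableEq C] (t : ℕ) (Y : R → C → ℤ) : Prop :=
  ∀ T : Finset C, T.card = t →
    ∀ ε : C → ℤ, (∀ j, ε j = 1 ∨ ε j = -1) →
      (Finset.univ.filter (fun i : R => ∀ j ∈ T, Y i j = ε j)).card * 2 ^ t = Fintype.card R

def J' {R C : Type} [Fintype R] (Y : R → C → ℤ) (l : Finset C) : ℤ :=
  ∑ i : R, ∏ j ∈ l, Y i j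

lemma oa_step {R C : Type} [Fintype R] [DecidableEq R] [Fintype C] [DecidableEq C]
    {t : ℕ} {Y : R → C → ℤ}
    (hpm : isPM' Y) (hoa : isOA' (t+1) Y) (hC : t < Fintype.card C) : isOA' t Y := by
  intro T hT ε hε
  have hex : ∃ c, c ∉ T := by
    by_contra h
    push_neg at h
    have : T = Finset.univ := Finset.eq_univ_iff_forall.2 h
    rw [this, Finset.card_univ] at hT
    omega
  obtain ⟨c, hc⟩ := hex
  set ε1 := Function.update ε c 1 with hε1
  set ε2 := Function.update ε c (-1) with hε2
  have hpm1 : ∀ j, ε1 j = 1 ∨ ε1 j = -1 := by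
    intro j; by_cases h : j = c
    · subst h; left; simp [hε1]
    · simp only [hε1, Function.update_of_ne h]; exact hε j
  have hpm2 : ∀ j, ε2 j = 1 ∨ ε2 j = -1 := by
    intro j; by_cases h : j = c
    · subst h; right; simp [hε2]
    · simp only [hε2, Function.update_of_ne h]; exact hε j
  have hT1 : (insert c T).card = t + 1 := by rw [Finset.card_insert_of_notMem hc, hT]
  have h1 : (Finset.univ.filter (fun i : R => ∀ j ∈ insert c T, Y i j = ε1 j)).card * 2 ^ (t+1)
      = Fintype.card R := by convert hoa (insert c T) hT1 ε1 hpm1 using 4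
  have h2 : (Finset.univ.filter (fun i : R => ∀ j ∈ insert c T, Y i j = ε2 j)).card * 2 ^ (t+1)
      = Fintype.card R := by convert hoa (insert c T) hT1 ε2 hpm2 using 4
  have hunion : (Finset.univ.filter (fun i : R => ∀ j ∈ T, Y i j = ε j)) =
      (Finset.univ.filter (fun i : R => ∀ j ∈ insert c T, Y i j = ε1 j)) ∪
      (Finset.univ.filter (fun i : R => ∀ j ∈ insert c T, Y i j = ε2 j)) := by
    ext i
    simp only [Finset.mem_filter, Finset.mem_union, Finset.mem_univ, true_and,
      Finset.mem_insert]
    constructor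
    · intro h
      rcases hpm i c with hy | hy
      · left; intro j hj
        rcases hj with rfl | hj
        · rw [hy, hε1, Function.update_self]
        · have hne : j ≠ c := fun hh => hc (hh ▸ hj)
          rw [hε1, Function.update_of_ne hne]; exact h j hj
      · right; intro j hj
        rcases hj with rfl | hj
        · rw [hy, hε2, Function.update_self]
        · have hne : j ≠ c := fun hh => hc (hh ▸ hj)
          rw [hε2, Function.update_of_ne hne]; exact h j hj
    · intro h
      rcases h with h | h
      · intro j hj
        have hne : j ≠ c := fun hh => hc (hh ▸ hj)
        have := h j (Or.inr hj)
        rwa [hε1, Function.update_of_ne hne] at this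
      · intro j hj
        have hne : j ≠ c := fun hh => hc (hh ▸ hj)
        have := h j (Or.inr hj)
        rwa [hε2, Function.update_of_ne hne] at this
  have hdisj : Disjoint
      (Finset.univ.filter (fun i : R => ∀ j ∈ insert c T, Y i j = ε1 j))
      (Finset.univ.filter (fun i : R => ∀ j ∈ insert c T, Y i j = ε2 j)) := by
    rw [Finset.disjoint_filter]
    intro i _ h1' h2'
    have ha := h1' c (Finset.mem_insert_self c T)
    have hb := h2' c (Finset.mem_insert_self c T)
    rw [hε1, Function.update_self] at ha
    rw [hε2, Function.update_self] at hb
    rw [ha] at hb; norm_num at hb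
  have hcard : (Finset.univ.filter (fun i : R => ∀ j ∈ T, Y i j = ε j)).card =
      (Finset.univ.filter (fun i : R => ∀ j ∈ insert c T, Y i j = ε1 j)).card +
      (Finset.univ.filter (fun i : R => ∀ j ∈ insert c T, Y i j = ε2 j)).card := by
    rw [hunion, Finset.card_union_of_disjoint hdisj]
  rw [pow_succ] at h1 h2
  have key : (Finset.univ.filter (fun i : R => ∀ j ∈ T, Y i j = ε j)).card * 2 ^ t * 2
      = Fintype.card R * 2 := by
    rw [hcard]
    calc ((Finset.univ.filter (fun i : R => ∀ j ∈ insert c T, Y i j = ε1 j)).card +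
        (Finset.univ.filter (fun i : R => ∀ j ∈ insert c T, Y i j = ε2 j)).card) * 2 ^ t * 2
        = (Finset.univ.filter (fun i : R => ∀ j ∈ insert c T, Y i j = ε1 j)).card * (2 ^ t * 2) +
          (Finset.univ.filter (fun i : R => ∀ j ∈ insert c T, Y i j = ε2 j)).card * (2 ^ t * 2) := by
          ring
      _ = Fintype.card R * 2 := by rw [h1, h2]; ring
  have final : (Finset.univ.filter (fun i : R => ∀ j ∈ T, Y i j = ε j)).card * 2 ^ t
      = Fintype.card R := Nat.eq_of_mul_eq_mul_right two_pos key
  convert final using 4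

lemma oa_mono {R C : Type} [Fintype R] [DecidableEq R] [Fintype C] [DecidableEq C]
    {t s : ℕ} {Y : R → C → ℤ}
    (hpm : isPM' Y) (hoa : isOA' t Y) (hst : s ≤ t) (htC : t ≤ Fintype.card C) : isOA' s Y := by
  obtain ⟨d, rfl⟩ := Nat.exists_eq_add_of_le hst
  clear hst
  induction d with
  | zero => simpa using hoa
  | succ n ih =>
    exact ih (oa_step hpm hoa (by omega)) (by omega)

lemma prod_pm {R C : Type} [DecidableEq C] {Y : R → C → ℤ} (hpm : isPM' Y) (i : R)
    (l : Finset C) : (∏ j ∈ l, Y i j) = 1 ∨ (∏ j ∈ l, Y i j) = -1 := by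
  induction l using Finset.induction_on with
  | empty => left; simp
  | @insert a s ha ih =>
    rw [Finset.prod_insert ha]
    rcases hpm i a with h | h <;> rcases ih with h2 | h2 <;> simp [h, h2]

lemma main (t : ℕ) : ∀ (R C : Type) [Fintype R] [DecidableEq R] [Fintype C] [DecidableEq C]
    (Y : R → C → ℤ) (lam : ℕ), isPM' Y → isOA' t Y →
    Fintype.card R = lam * 2 ^ t → t + 2 ≤ Fintype.card C → Even lam →
    ∀ l : Finset C, (2 ^ (t + 1) : ℤ) ∣ J' Y l := by
  induction t with
  | zero =>
    intro R C _ _ _ _ Y lam hpm hoa hN hk hlam l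
    obtain ⟨m, hm⟩ := hlam
    have h2N : (2 : ℤ) ∣ (Fintype.card R : ℤ) := by
      refine ⟨m, ?_⟩
      rw [hN, hm]; push_cast; ring
    have hdiff : (2:ℤ) ∣ (J' Y l - Fintype.card R) := by
      have heq : J' Y l - (Fintype.card R : ℤ) = ∑ i : R, ((∏ j ∈ l, Y i j) - 1) := by
        rw [J', Finset.sum_sub_distrib]
        simp [Finset.card_univ]
      rw [heq]
      apply Finset.dvd_sum
      intro i _
      rcases prod_pm hpm i l with h | h <;> rw [h] <;> norm_num
    have hd := dvd_add hdiff h2N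
    simpa using hd
  | succ t ih =>
    intro R C _ _ _ _ Y lam hpm hoa hN hk hlam l
    induction l using Finset.strongInduction with
    | _ l ihl =>
    rcases Finset.eq_empty_or_nonempty l with rfl | ⟨c, hc⟩
    · have hJ : J' Y (∅ : Finset C) = (Fintype.card R : ℤ) := by
        simp [J', Finset.card_univ]
      rw [hJ, hN]
      obtain ⟨m, hm⟩ := hlam
      refine ⟨(m : ℤ), ?_⟩
      rw [hm]; push_cast; ring
    · set l' := l.erase c with hl'
      have hcl' : c ∉ l' := Finset.notMem_erase c l
      -- restricted design
      have hoa1 : isOA' 1 Y := oa_mono hpm hoa (by omega) (by omega)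
      -- number of rows with Y i c = 1
      have hRp : Fintype.card {i : R // Y i c = 1} * 2 = Fintype.card R := by
        have h1 : (Finset.univ.filter (fun i : R => ∀ j ∈ ({c} : Finset C), Y i j = 1)).card
            * 2 ^ 1 = Fintype.card R := by
          convert hoa1 {c} (Finset.card_singleton c) (fun _ => 1) (fun _ => Or.inl rfl) using 4
        have h2 : Fintype.card {i : R // Y i c = 1}
            = (Finset.univ.filter (fun i : R => ∀ j ∈ ({c} : Finset C), Y i j = 1)).card := by
          rw [Fintype.card_subtype]
          congr 1
          ext i
          simp
        rw [h2]
        simpa using h1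
      have hcardRp : Fintype.card {i : R // Y i c = 1} = lam * 2 ^ t := by
        have : Fintype.card {i : R // Y i c = 1} * 2 = (lam * 2 ^ t) * 2 := by
          rw [hRp, hN, pow_succ, mul_assoc]
        exact Nat.eq_of_mul_eq_mul_right two_pos this
      -- pm of restricted design
      have hpmYp : isPM' (fun (i : {i : R // Y i c = 1}) (j : {j : C // j ≠ c}) => Y i.1 j.1) :=
        fun i j => hpm i.1 j.1
      -- OA strength t of restricted design
      have hoaYp : isOA' t (fun (i : {i : R // Y i c = 1}) (j : {j : C // j ≠ c}) => Y i.1 j.1) := by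
        intro T'' hT'' ε'' hε''
        set emb : {j : C // j ≠ c} ↪ C := Function.Embedding.subtype _ with hemb
        have hcTm : c ∉ T''.map emb := by
          simp only [Finset.mem_map, hemb, Function.Embedding.coe_subtype]
          rintro ⟨a, _, ha⟩
          exact a.2 ha
        have hTcard : (insert c (T''.map emb)).card = t + 1 := by
          rw [Finset.card_insert_of_notMem hcTm, Finset.card_map, hT'']
        set ε : C → ℤ := fun j => if h : j ≠ c then ε'' ⟨j, h⟩ else 1 with hεdef
        have hεne : ∀ (j : C) (h : j ≠ c), ε j = ε'' ⟨j, h⟩ := by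
          intro j h; simp [hεdef, h]
        have hεpm : ∀ j, ε j = 1 ∨ ε j = -1 := by
          intro j
          by_cases h : j ≠ c
          · rw [hεne j h]; exact hε'' _
          · left; simp [hεdef, h]
        have hεc : ε c = 1 := by simp [hεdef]
        have hbig : (Finset.univ.filter
            (fun i : R => ∀ j ∈ insert c (T''.map emb), Y i j = ε j)).card * 2 ^ (t+1)
            = Fintype.card R := by
          convert hoa (insert c (T''.map emb)) hTcard ε hεpm using 4
        have hbij : (Finset.univ.filter (fun i : {i : R // Y i c = 1} =>
              ∀ j ∈ T'', Y i.1 j.1 = ε'' j)).card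
            = (Finset.univ.filter
              (fun i : R => ∀ j ∈ insert c (T''.map emb), Y i j = ε j)).card := by
          apply Finset.card_bij (fun i _ => i.1)
          · intro a ha
            simp only [Finset.mem_filter, Finset.mem_univ, true_and] at ha ⊢
            intro j hj
            rcases Finset.mem_insert.1 hj with rfl | hj
            · rw [a.2, hεc]
            · obtain ⟨j'', hj'', rfl⟩ := Finset.mem_map.1 hj
              have : (emb j'' : C) = j''.1 := rfl
              rw [this, hεne j''.1 j''.2]
              have := ha j'' hj''
              simpa using this
          · intro a _ b _ hab
            exact Subtype.ext hab
          · intro b hb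
            simp only [Finset.mem_filter, Finset.mem_univ, true_and] at hb
            have hbc : Y b c = 1 := by
              have := hb c (Finset.mem_insert_self _ _)
              rwa [hεc] at this
            refine ⟨⟨b, hbc⟩, ?_, rfl⟩
            simp only [Finset.mem_filter, Finset.mem_univ, true_and]
            intro j'' hj''
            have hmem : (j'' : C) ∈ insert c (T''.map emb) :=
              Finset.mem_insert_of_mem (Finset.mem_map_of_mem emb hj'')
            have := hb j''.1 hmem
            rwa [hεne j''.1 j''.2, Subtype.coe_eta] at this
        have key : (Finset.univ.filter (fun i : {i : R // Y i c = 1} =>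
              ∀ j ∈ T'', Y i.1 j.1 = ε'' j)).card * 2 ^ t * 2
            = Fintype.card {i : R // Y i c = 1} * 2 := by
          rw [hbij]
          calc (Finset.univ.filter
              (fun i : R => ∀ j ∈ insert c (T''.map emb), Y i j = ε j)).card * 2 ^ t * 2
              = (Finset.univ.filter
                (fun i : R => ∀ j ∈ insert c (T''.map emb), Y i j = ε j)).card * 2 ^ (t+1) := by
                rw [pow_succ, mul_assoc]
            _ = Fintype.card R := hbig
            _ = Fintype.card {i : R // Y i c = 1} * 2 := hRp.symm
        have final := Nat.eq_of_mul_eq_mul_right two_pos key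
        convert final using 4
      -- card of restricted column type
      have hkp : t + 2 ≤ Fintype.card {j : C // j ≠ c} := by
        have : Fintype.card {j : C // j ≠ c} = Fintype.card C - 1 := by
          have := Fintype.card_subtype_compl (fun j : C => j = c) (α := C)
          simp only [Fintype.card_subtype_eq] at this
          exact this
        omega
      -- apply outer IH
      set l'' : Finset {j : C // j ≠ c} := l'.subtype (fun j => j ≠ c) with hl''
      have hA : (2 ^ (t + 1) : ℤ) ∣
          J' (fun (i : {i : R // Y i c = 1}) (j : {j : C // j ≠ c}) => Y i.1 j.1) l'' :=
        ih _ _ _ lam hpmYp hoaYp hcardRp hkp hlam l''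
      -- the splitting identity
      have hmap : l''.map (Function.Embedding.subtype _) = l' := by
        rw [hl'', Finset.subtype_map]
        apply Finset.filter_eq_self.2
        intro x hx hxc
        exact hcl' (hxc ▸ hx)
      have hprod : ∀ i : {i : R // Y i c = 1},
          (∏ j ∈ l'', Y i.1 j.1) = ∏ j ∈ l', Y i.1 j := by
        intro i
        rw [← hmap, Finset.prod_map]
        rfl
      have hsplit : J' Y l + J' Y l' =
          2 * J' (fun (i : {i : R // Y i c = 1}) (j : {j : C // j ≠ c}) => Y i.1 j.1) l'' := by
        have e1 : J' Y l = ∑ i : R, Y i c * ∏ j ∈ l', Y i j := by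
          rw [J']
          exact Finset.sum_congr rfl fun i _ => (Finset.mul_prod_erase l (Y i) hc).symm
        have e2 : J' Y l + J' Y l' = ∑ i : R, (Y i c + 1) * ∏ j ∈ l', Y i j := by
          rw [e1, J', ← Finset.sum_add_distrib]
          exact Finset.sum_congr rfl fun i _ => by ring
        rw [e2]
        have e3 : ∑ i : R, (Y i c + 1) * ∏ j ∈ l', Y i j
            = ∑ i ∈ Finset.univ.filter (fun i : R => Y i c = 1),
                (Y i c + 1) * ∏ j ∈ l', Y i j := by
          symm
          apply Finset.sum_filter_of_ne
          intro i _ hne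
          rcases hpm i c with h | h
          · exact h
          · exfalso; apply hne; rw [h]; ring
        have e4 : ∑ i ∈ Finset.univ.filter (fun i : R => Y i c = 1),
              (Y i c + 1) * ∏ j ∈ l', Y i j
            = ∑ i : {i : R // Y i c = 1}, (Y i.1 c + 1) * ∏ j ∈ l', Y i.1 j := by
          apply Finset.sum_subtype
          intro x; simp
        rw [e3, e4, J', Finset.mul_sum]
        apply Finset.sum_congr rfl
        intro i _
        rw [hprod i, i.2]
        ring
      -- inner IH on l'
      have hJl' : (2 ^ (t + 1 + 1) : ℤ) ∣ J' Y l' := ihl l' (Finset.erase_ssubset hc)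
      have h2A : (2 ^ (t + 1 + 1) : ℤ) ∣
          2 * J' (fun (i : {i : R // Y i c = 1}) (j : {j : C // j ≠ c}) => Y i.1 j.1) l'' := by
        obtain ⟨m, hm⟩ := hA
        exact ⟨m, by rw [hm]; ring⟩
      have : J' Y l = 2 * J' (fun (i : {i : R // Y i c = 1}) (j : {j : C // j ≠ c}) => Y i.1 j.1) l''
          - J' Y l' := by linarith [hsplit]
      rw [this]
      exact dvd_sub h2A hJl'

theorem stmt2 (N k t lam : ℕ) (Y : Fin N → Fin k → ℤ)
    (hpm : isPM Y) (hoa : isOA2 N k t Y)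
    (ht1 : 1 ≤ t) (htk : t ≤ k) (hN : N = lam * 2 ^ t) (hk : t + 2 ≤ k)
    (hlam : Even lam) :
    ∀ l : Finset (Fin k), l.Nonempty → (2 ^ (t + 1) : ℤ) ∣ Jchar Y l := by
  intro l _
  have hoa' : isOA' t Y := by
    intro T hT ε hε
    have h := hoa T hT ε hε
    rw [Fintype.card_fin]
    convert h using 4
  have hN' : Fintype.card (Fin N) = lam * 2 ^ t := by rw [Fintype.card_fin]; exact hN
  have hk' : t + 2 ≤ Fintype.card (Fin k) := by rw [Fintype.card_fin]; exact hk
  exact main t (Fin N) (Fin k) Y lam hpm hoa' hN' hk' hlam l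
end

section
/- Let Y be a two-level ±1 design that is an OA(N,k,2,t) with N = λ·2^t and k ≥ t + 2, and let j be an integer with t + 1 ≤ j ≤ k. If λ is even, or if the binomial coefficient C(j−1, j−t−1) is even, then the integer Σ_{l ⊆ Fin k, |l| = j} J(l)² (which equals N²·A_j(Y)) is divisible by 2^{2t+2}. -/
open Finset

def matchingRows {N k : ℕ} (Y : Fin N → Fin k → ℤ) (S : Finset (Fin k)) (ε : Fin k → ℤ) :
    Finset (Fin N) :=
  univ.filter fun i => ∀ j ∈ S, Y i j = ε j

section
variable {N k : ℕ} {Y : Fin N → Fin k → ℤ}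

lemma card_matchingRows_insert_add (hpm : isPM Y) {S : Finset (Fin k)} {c : Fin k} (hc : c ∉ S)
    {ε : Fin k → ℤ} (hεc : ε c = 1 ∨ ε c = -1) :
    #(matchingRows Y (insert c S) ε) +
        #(matchingRows Y (insert c S) (Function.update ε c (-ε c))) =
      #(matchingRows Y S ε) := by
  have hupdate : ∀ j ∈ S, Function.update ε c (-ε c) j = ε j := fun j hj =>
    Function.update_of_ne (ne_of_mem_of_not_mem hj hc) _ _
  rw [← card_filter_add_card_filter_not (s := matchingRows Y S ε) (fun i => Y i c = ε c)]
  congr 1 <;> congr 1 <;> ext i <;>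
    simp only [matchingRows, mem_filter, mem_univ, true_and, forall_mem_insert]
  · exact and_comm
  · rw [Function.update_self, forall₂_congr fun j hj => by rw [hupdate j hj], and_comm]
    rcases hpm i c with h | h <;> rcases hεc with h' | h' <;> simp [h, h']

lemma isOA2.of_succ {t : ℕ} (hpm : isPM Y) (hoa : isOA2 N k (t + 1) Y) (htk : t < k) :
    isOA2 N k t Y := by
  intro T hT ε hε
  obtain ⟨c, -, hc⟩ := exists_mem_notMem_of_card_lt_card (s := T) (t := univ) (by simpa [hT])
  have hε' : ∀ j, Function.update ε c (-ε c) j = 1 ∨ Function.update ε c (-ε c) j = -1 := by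
    intro j
    rcases eq_or_ne j c with rfl | hj
    · rcases hε j with h | h <;> simp [h]
    · simpa [Function.update_of_ne hj] using hε j
  have hcard : #(insert c T) = t + 1 := by rw [card_insert_of_notMem hc, hT]
  have h₁ : #(matchingRows Y (insert c T) ε) * 2 ^ (t + 1) = N := hoa _ hcard ε hε
  have h₂ : #(matchingRows Y (insert c T) _) * 2 ^ (t + 1) = N := hoa _ hcard _ hε'
  change #(matchingRows Y T ε) * 2 ^ t = N
  rw [← card_matchingRows_insert_add hpm hc (hε c)]
  apply Nat.eq_of_mul_eq_mul_right two_pos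
  rw [pow_succ] at h₁ h₂
  linarith

lemma isOA2.of_le {t s : ℕ} (hpm : isPM Y) (hoa : isOA2 N k t Y) (htk : t ≤ k) (hst : s ≤ t) :
    isOA2 N k s Y := by
  induction hst using Nat.decreasingInduction with
  | self => exact hoa
  | of_succ s hs ih => exact ih.of_succ hpm (by omega)

lemma sum_prod_sub_one_eq (hpm : isPM Y) (S : Finset (Fin k)) :
    ∑ i, ∏ j ∈ S, (Y i j - 1) = (-2) ^ #S * #(matchingRows Y S fun _ => -1) := by
  have hprod (i : Fin N) :
      ∏ j ∈ S, (Y i j - 1) = if ∀ j ∈ S, Y i j = -1 then (-2) ^ #S else 0 := by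
    split_ifs with h
    · rw [prod_congr rfl fun j hj => by rw [h j hj], prod_const]
      norm_num
    · obtain ⟨j, hj, hne⟩ := not_forall₂.mp h
      exact prod_eq_zero hj (by rw [(hpm i j).resolve_right hne]; norm_num)
  rw [sum_congr rfl fun i _ => hprod i, ← sum_filter, sum_const, nsmul_eq_mul, mul_comm]
  rfl

lemma Jchar_eq_sum_powerset (hpm : isPM Y) (l : Finset (Fin k)) :
    Jchar Y l = ∑ S ∈ l.powerset, (-2 : ℤ) ^ #S * #(matchingRows Y S fun _ => -1) := by
  have hexpand (i : Fin N) : ∏ j ∈ l, Y i j = ∑ S ∈ l.powerset, ∏ j ∈ S, (Y i j - 1) := by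
    rw [← prod_add_one]; simp
  simp only [Jchar, hexpand, sum_comm (s := univ), sum_prod_sub_one_eq hpm]

lemma neg_two_pow_mul_card_matchingRows_of_card_le {t : ℕ} (hpm : isPM Y) (hoa : isOA2 N k t Y)
    (htk : t ≤ k) {S : Finset (Fin k)} (hS : #S ≤ t) :
    (-2) ^ #S * (#(matchingRows Y S fun _ => -1) : ℤ) = (-1) ^ #S * N := by
  have h : (#(matchingRows Y S fun _ => -1) : ℤ) * 2 ^ #S = N := mod_cast
    hoa.of_le hpm htk hS S rfl _ fun _ => Or.inr rfl
  rw [show (-2 : ℤ) = -1 * 2 by norm_num, mul_pow]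
  linear_combination (-1 : ℤ) ^ #S * h

lemma sum_range_sum_powersetCard_neg_two_pow_mul_card {t n : ℕ} (hpm : isPM Y)
    (hoa : isOA2 N k t Y) (htk : t ≤ k) {l : Finset (Fin k)} (hn : #l = n + 1) :
    ∑ s ∈ range (t + 1), ∑ S ∈ powersetCard s l,
        (-2 : ℤ) ^ #S * #(matchingRows Y S fun _ => -1) =
      (-1) ^ t * n.choose t * N := by
  have hlayer : ∀ s ∈ range (t + 1),
      ∑ S ∈ powersetCard s l, (-2 : ℤ) ^ #S * #(matchingRows Y S fun _ => -1) =
        (-1) ^ s * (n + 1).choose s * N := by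
    intro s hs
    have hterm : ∀ S ∈ powersetCard s l,
        (-2 : ℤ) ^ #S * #(matchingRows Y S fun _ => -1) = (-1) ^ s * N := by
      intro S hS
      have hSs : #S = s := (mem_powersetCard.mp hS).2
      rw [neg_two_pow_mul_card_matchingRows_of_card_le hpm hoa htk
        (hSs ▸ Nat.lt_succ_iff.mp (mem_range.mp hs)), hSs]
    rw [sum_congr rfl hterm, sum_const, card_powersetCard, hn, nsmul_eq_mul]
    ring
  rw [sum_congr rfl hlayer, ← sum_mul, Int.alternating_sum_range_choose_eq_choose]

lemma two_pow_succ_dvd_Jchar {t lam : ℕ} (hpm : isPM Y) (hoa : isOA2 N k t Y)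
    (hN : N = lam * 2 ^ t) {l : Finset (Fin k)} (hl : t + 1 ≤ #l)
    (heven : Even (lam * (#l - 1).choose t)) :
    (2 : ℤ) ^ (t + 1) ∣ Jchar Y l := by
  have htk : t ≤ k := by simpa using (Nat.le_succ t).trans (hl.trans (card_le_univ l))
  obtain ⟨n, hn⟩ : ∃ n, #l = n + 1 := ⟨#l - 1, by omega⟩
  rw [hn, Nat.add_sub_cancel] at heven
  obtain ⟨m, hm⟩ := heven
  have hm' : (lam : ℤ) * n.choose t = m + m := mod_cast hm
  rw [Jchar_eq_sum_powerset hpm, sum_powerset, hn,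
    ← sum_range_add_sum_Ico _ (show t + 1 ≤ n + 1 + 1 by omega),
    sum_range_sum_powersetCard_neg_two_pow_mul_card hpm hoa htk hn]
  refine dvd_add ⟨(-1) ^ t * m, ?_⟩ (dvd_sum fun s hs => dvd_sum fun S hS => ?_)
  · push_cast [hN, pow_succ]
    linear_combination (-1 : ℤ) ^ t * 2 ^ t * hm'
  · rw [(mem_powersetCard.mp hS).2]
    exact ((pow_dvd_pow_of_dvd (by norm_num) (t + 1)).trans
      (pow_dvd_pow _ (mem_Ico.mp hs).1)).mul_right _

end

theorem stmt5_general (N k t lam j : ℕ) (Y : Fin N → Fin k → ℤ)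
    (hpm : isPM Y) (hoa : isOA2 N k t Y)
    (hN : N = lam * 2 ^ t) (hj1 : t + 1 ≤ j)
    (hcase : Even lam ∨ Even ((j - 1).choose (j - t - 1))) :
    (2 ^ (2 * t + 2) : ℤ) ∣
      ∑ l ∈ Finset.univ.filter (fun l : Finset (Fin k) => l.card = j),
        (Jchar Y l) ^ 2 := by
  have heven : Even (lam * (j - 1).choose t) := by
    rw [← Nat.choose_symm_of_eq_add (by omega : j - 1 = t + (j - t - 1))] at hcase
    rcases hcase with h | h
    · exact h.mul_right _
    · exact h.mul_left _
  refine dvd_sum fun l hl => ?_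
  have hlj : #l = j := (mem_filter.mp hl).2
  rw [show 2 * t + 2 = (t + 1) * 2 by ring, pow_mul]
  exact pow_dvd_pow_of_dvd (two_pow_succ_dvd_Jchar hpm hoa hN (hlj ▸ hj1) (hlj ▸ heven)) 2

theorem stmt5 (N k t lam j : ℕ) (Y : Fin N → Fin k → ℤ)
    (hpm : isPM Y) (hoa : isOA2 N k t Y)
    (ht1 : 1 ≤ t) (htk : t ≤ k) (hN : N = lam * 2 ^ t)
    (hk : t + 2 ≤ k) (hj1 : t + 1 ≤ j) (hj2 : j ≤ k)
    (hcase : Even lam ∨ Even ((j - 1).choose (j - t - 1))) :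
    (2 ^ (2 * t + 2) : ℤ) ∣
      ∑ l ∈ Finset.univ.filter (fun l : Finset (Fin k) => l.card = j),
        (Jchar Y l) ^ 2 :=
  stmt5_general N k t lam j Y hpm hoa hN hj1 hcase
end
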